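/- For every CQ q(x) and all integers 1 ≤ d ≤ d', one has q ⊆ q̃_{d'} ⊆ q̃_d; that is, the family of unravelings forms a decreasing chain of approximations q ⊆ ⋯ ⊆ q̃_3 ⊆ q̃_2 ⊆ q̃_1, each containing the answers of q over every knowledge graph. -/
import Mathlib


/-!
Formalization of conjunctive queries (CQs) over knowledge graphs, homomorphisms,
paths, valid paths, unravelings, query graphs and tree-likeness, following the
paper "Approximate Answering of Graph Queries" setting.
-/

namespace KGQuery

/-- Constants: a countably infinite set. -/
abbrev Con : Type := ℕ

/-- Variables: a countably infinite set (disjoint from the constants via `Term`). -/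
abbrev Var : Type := ℕ

/-- Terms are variables or constants. -/
inductive Term : Type
  | var : Var → Term
  | con : Con → Term
deriving DecidableEq

/-- An atom `R(y, z)` with `y, z` terms. -/
structure Atom (Rel : Type) : Type where
  rel : Rel
  src : Term
  tgt : Term
deriving DecidableEq

/-- A fact `R(a, b)` with `a, b` constants. -/
structure Fact (Rel : Type) : Type where
  rel : Rel
  src : Con
  tgt : Con
deriving DecidableEq

/-- A knowledge graph: a finite set of facts. -/
abbrev KG (Rel : Type) : Type := Finset (Fact Rel)

/-- A (unary) conjunctive query: a finite nonempty set of atoms in which the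
target variable occurs. -/
structure CQ (Rel : Type) : Type where
  target : Var
  atoms : Finset (Atom Rel)
  atoms_nonempty : atoms.Nonempty
  target_occurs : ∃ A ∈ atoms, A.src = Term.var target ∨ A.tgt = Term.var target

variable {Rel : Type}

/-- The terms occurring in the atoms of a CQ. -/
def CQ.terms (q : CQ Rel) : Set Term :=
  {t | ∃ A ∈ q.atoms, A.src = t ∨ A.tgt = t}

/-- `Var(q)`: the variables occurring in `q`. -/
def CQ.vars (q : CQ Rel) : Set Var := {v | Term.var v ∈ q.terms}

/-- `Con(q)`: the constants occurring in `q`. -/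
def CQ.cons (q : CQ Rel) : Set Con := {c | Term.con c ∈ q.terms}

/-- The answer `q(G)` of a CQ `q` over a knowledge graph `G`: the set of constants
`a` such that some assignment `μ` fixing the constants of `q` maps the target
variable to `a` and every atom of `q` to a fact of `G`. -/
def CQ.answer (q : CQ Rel) (G : KG Rel) : Set Con :=
  {a | ∃ μ : Term → Con,
    (∀ c ∈ q.cons, μ (Term.con c) = c) ∧
    μ (Term.var q.target) = a ∧
    ∀ A ∈ q.atoms, (⟨A.rel, μ A.src, μ A.tgt⟩ : Fact Rel) ∈ G}

/-- Containment `q ⊆ q'`: the answers of `q` are contained in those of `q'`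
over every knowledge graph. -/
def CQ.contained (q q' : CQ Rel) : Prop :=
  ∀ G : KG Rel, q.answer G ⊆ q'.answer G

/-- A homomorphism from `q` to `q'`: maps the target variable of `q` to the target
variable of `q'`, fixes the constants of `q`, and maps every atom of `q` to an
atom of `q'`. -/
def IsHom (q q' : CQ Rel) (h : Term → Term) : Prop :=
  h (Term.var q.target) = Term.var q'.target ∧
  (∀ c ∈ q.cons, h (Term.con c) = Term.con c) ∧
  ∀ A ∈ q.atoms, (⟨A.rel, h A.src, h A.tgt⟩ : Atom Rel) ∈ q'.atoms

/-! ### The canonical database -/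

/-- Replace variables by constants using `ι`. -/
def termToCon (ι : Var → Con) : Term → Con
  | Term.var v => ι v
  | Term.con c => c

/-- The canonical database of `q`: the knowledge graph obtained from the atoms of
`q` by replacing each variable `v` by the constant `ι v`. -/
def canonicalDB [DecidableEq Rel] (q : CQ Rel) (ι : Var → Con) : KG Rel :=
  q.atoms.image (fun A => ⟨A.rel, termToCon ι A.src, termToCon ι A.tgt⟩)

/-! ### Paths and valid paths -/

/-- The atom `A` is traversed from `u` to `v`: forward (`A = R(u,v)`) or
backward (`A = R(v,u)`). -/
def Traverses (A : Atom Rel) (u v : Term) : Prop :=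
  (A.src = u ∧ A.tgt = v) ∨ (A.src = v ∧ A.tgt = u)

/-- A path starting at the term `u`, encoded as its list of steps `(Aᵢ, xᵢ)`:
each atom `Aᵢ` belongs to `q` and is traversed from `xᵢ₋₁` to `xᵢ`. -/
def IsPathFrom (q : CQ Rel) : Term → List (Atom Rel × Term) → Prop
  | _, [] => True
  | u, (A, v) :: rest => A ∈ q.atoms ∧ Traverses A u v ∧ IsPathFrom q v rest

/-- A path of `q(x)`: a path starting at the target variable `x`.
The path `x₀, A₁, x₁, …, A_k, x_k` is encoded as the list `[(A₁,x₁),…,(A_k,x_k)]`,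
whose length `k` is the length of the path. -/
def IsPath (q : CQ Rel) (P : List (Atom Rel × Term)) : Prop :=
  IsPathFrom q (Term.var q.target) P

/-- The end of a path (the target variable for the path of length `0`). -/
def pathEnd (q : CQ Rel) (P : List (Atom Rel × Term)) : Term :=
  match P.getLast? with
  | none => Term.var q.target
  | some s => s.2

/-- Validity: no two consecutive steps traverse the same atom. -/
def IsValid (P : List (Atom Rel × Term)) : Prop :=
  (P.map Prod.fst).Chain' (· ≠ ·)

/-- A valid path of `q`. -/
def IsValidPath (q : CQ Rel) (P : List (Atom Rel × Term)) : Prop :=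
  IsPath q P ∧ IsValid P

/-- A path is unanchored if it ends at a variable (anchored if it ends at a
constant). -/
def Unanchored (q : CQ Rel) (P : List (Atom Rel × Term)) : Prop :=
  ∃ v : Var, pathEnd q P = Term.var v

/-! ### Unravelings -/

/-- The term `o_P` of the unraveling associated to a valid path `P`: the fresh
variable `z_P = enc P` if `P` is unanchored, and the constant `end(P)` otherwise. -/
def oTerm (q : CQ Rel) (enc : List (Atom Rel × Term) → Var)
    (P : List (Atom Rel × Term)) : Term :=
  match pathEnd q P with
  | Term.var _ => Term.var (enc P)
  | Term.con c => Term.con c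

/-- The set of atoms of the unraveling `q̃_d` of `q`: for every valid path
`P' = P, A', end(P')` of length at most `d`, the atom `R(o_P, o_{P'})` if
`A' = R(end(P), end(P'))`, and the atom `R(o_{P'}, o_P)` if
`A' = R(end(P'), end(P))`. -/
def UnravelAtoms (q : CQ Rel) (enc : List (Atom Rel × Term) → Var) (d : ℕ) :
    Set (Atom Rel) :=
  {B | ∃ (P : List (Atom Rel × Term)) (A' : Atom Rel) (t' : Term),
    IsValidPath q (P ++ [(A', t')]) ∧ P.length + 1 ≤ d ∧
    ((A'.src = pathEnd q P ∧ A'.tgt = t' ∧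
        B = ⟨A'.rel, oTerm q enc P, oTerm q enc (P ++ [(A', t')])⟩) ∨
     (A'.src = t' ∧ A'.tgt = pathEnd q P ∧
        B = ⟨A'.rel, oTerm q enc (P ++ [(A', t')]), oTerm q enc P⟩))}

/-- `qd` is (a presentation of) the unraveling `q̃_d` of `q`, where the injective
map `enc` provides the distinct fresh variables `z_P` indexing the unanchored
valid paths: its target variable is `z_{P₀} = enc []` and its atoms are exactly
the unraveling atoms. -/
def IsUnraveling (q : CQ Rel) (enc : List (Atom Rel × Term) → Var) (d : ℕ)
    (qd : CQ Rel) : Prop :=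
  Function.Injective enc ∧ qd.target = enc [] ∧
    (↑qd.atoms : Set (Atom Rel)) = UnravelAtoms q enc d

/-! ### Query graphs and tree-likeness -/

/-- Nodes of the query graph of a CQ: either a variable, or an occurrence of a
constant in an atom (`false` = source position, `true` = target position). -/
abbrev QNode (Rel : Type) : Type := Var ⊕ (Atom Rel × Bool)

/-- The term at position `b` of an atom. -/
def Atom.pos (A : Atom Rel) (b : Bool) : Term := cond b A.tgt A.src

/-- The node of the query graph corresponding to position `b` of atom `A`:
the variable itself, or the occurrence node for a constant. -/
def endpointNode (A : Atom Rel) (b : Bool) : QNode Rel :=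
  match A.pos b with
  | Term.var v => Sum.inl v
  | Term.con _ => Sum.inr (A, b)

/-- The node set of the query graph of `q`: the variables of `q` together with
one node per occurrence of a constant in an atom of `q`. -/
def nodeSet (q : CQ Rel) : Set (QNode Rel) :=
  (Sum.inl '' q.vars) ∪
    {n | ∃ A ∈ q.atoms, ∃ b : Bool, (∃ c : Con, A.pos b = Term.con c) ∧
      n = Sum.inr (A, b)}

/-- Adjacency in the query graph of `q`: one (undirected) edge per atom. -/
def Adj (q : CQ Rel) (m n : QNode Rel) : Prop :=
  ∃ A ∈ q.atoms,
    (m = endpointNode A false ∧ n = endpointNode A true) ∨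
    (m = endpointNode A true ∧ n = endpointNode A false)

/-- The root of the query graph of a CQ: its target variable. -/
def rootNode (q : CQ Rel) : QNode Rel := Sum.inl q.target

/-- `q` is tree-like: its query graph is a tree rooted at the target variable,
i.e. every node is connected to the root and the number of edges (= atoms) is one
less than the number of nodes. -/
def IsTreeLike (q : CQ Rel) : Prop :=
  (∀ n ∈ nodeSet q, Relation.ReflTransGen (Adj q) (rootNode q) n) ∧
  (nodeSet q).ncard = q.atoms.card + 1

/-- Reachability in at most `d` steps of a relation. -/
def ReachIn {α : Type*} (r : α → α → Prop) : ℕ → α → α → Prop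
  | 0, a, b => a = b
  | n + 1, a, b => a = b ∨ ∃ c, r a c ∧ ReachIn r n c b

/-- The (rooted) query graph of `q` has depth at most `d`: every node is within
distance `d` of the root. -/
def HasDepthLE (q : CQ Rel) (d : ℕ) : Prop :=
  ∀ n ∈ nodeSet q, ReachIn (Adj q) d (rootNode q) n

/-- The depth of (the query graph of) a tree-like CQ: the length of the longest
path from the root to a node. -/
noncomputable def depth (q : CQ Rel) : ℕ := sInf {d : ℕ | HasDepthLE q d}

/-! ### Reduction of paths to valid paths -/

/-- One step of reduction: replace a subsequence `y, A, z, A, y` by `y`. -/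
def PathReduce (q : CQ Rel) (P Q : List (Atom Rel × Term)) : Prop :=
  ∃ (L1 : List (Atom Rel × Term)) (A : Atom Rel) (z y : Term)
    (L2 : List (Atom Rel × Term)),
    pathEnd q L1 = y ∧ P = L1 ++ (A, z) :: (A, y) :: L2 ∧ Q = L1 ++ L2

/-- Append one step to an already valid path, cancelling a backtracking step. -/
def validAppend [DecidableEq Rel] (P : List (Atom Rel × Term))
    (s : Atom Rel × Term) : List (Atom Rel × Term) :=
  match P.getLast? with
  | none => [s]
  | some t => if t.1 = s.1 then P.dropLast else P ++ [s]

/-- `valid(P)`: the unique valid path obtained from the path `P` by iteratively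
replacing subsequences of the form `y, A, z, A, y` by `y`. -/
def validify [DecidableEq Rel] (P : List (Atom Rel × Term)) :
    List (Atom Rel × Term) :=
  P.foldl validAppend []

/-- The image of an atom under a map on terms. -/
def Atom.mapTerms (h : Term → Term) (A : Atom Rel) : Atom Rel :=
  ⟨A.rel, h A.src, h A.tgt⟩

/-- The image under `h` of a path: apply `h` to every element and every atom. -/
def mapPath (h : Term → Term) (P : List (Atom Rel × Term)) :
    List (Atom Rel × Term) :=
  P.map (fun s => (s.1.mapTerms h, h s.2))

end KGQuery

namespace KGQuery

variable {Rel : Type}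

lemma isPathFrom_prefix {q : CQ Rel} :
    ∀ {P : List (Atom Rel × Term)} {u : Term} {Q : List (Atom Rel × Term)},
      IsPathFrom q u (P ++ Q) → IsPathFrom q u P
  | [], _, _, _ => trivial
  | (A, v) :: _, _, _, h => ⟨h.1, h.2.1, isPathFrom_prefix h.2.2⟩

lemma isPathFrom_concat {q : CQ Rel} :
    ∀ {P : List (Atom Rel × Term)} {u : Term} {A : Atom Rel} {t : Term},
      IsPathFrom q u (P ++ [(A, t)]) → A ∈ q.atoms ∧ (A.src = t ∨ A.tgt = t)
  | [], _, _, _, h => by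
      obtain ⟨hA, htr, _⟩ := h
      refine ⟨hA, ?_⟩
      rcases htr with ⟨_, h2⟩ | ⟨h1, _⟩
      · exact Or.inr h2
      · exact Or.inl h1
  | (B, v) :: rest, _, _, _, h => isPathFrom_concat h.2.2

lemma pathEnd_concat (q : CQ Rel) (P : List (Atom Rel × Term))
    (s : Atom Rel × Term) : pathEnd q (P ++ [s]) = s.2 := by
  simp [pathEnd, List.getLast?_concat]

lemma pathEnd_con_mem {q : CQ Rel} {P : List (Atom Rel × Term)}
    (hp : IsPath q P) {c : Con} (hc : pathEnd q P = Term.con c) : c ∈ q.cons := by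
  rcases List.eq_nil_or_concat P with rfl | ⟨L, s, rfl⟩
  · simp [pathEnd] at hc
  · obtain ⟨A, t⟩ := s
    rw [List.concat_eq_append] at hp hc
    rw [pathEnd_concat] at hc
    obtain ⟨hA, hst⟩ := isPathFrom_concat hp
    subst hc
    refine ⟨A, hA, hst⟩

/-- For every CQ `q(x)` and all integers `1 ≤ d ≤ d'`, one has
`q ⊆ q̃_{d'} ⊆ q̃_d`: the unravelings form a decreasing chain of approximations,
each containing the answers of `q` over every knowledge graph. -/
theorem unraveling_chain {Rel : Type} [Fintype Rel] [DecidableEq Rel]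
    (q : CQ Rel) (enc : List (Atom Rel × Term) → Var)
    (d d' : ℕ) (hd : 1 ≤ d) (hdd' : d ≤ d')
    (qd qd' : CQ Rel)
    (hu : IsUnraveling q enc d qd) (hu' : IsUnraveling q enc d' qd') :
    q.contained qd' ∧ qd'.contained qd := by
  classical
  obtain ⟨hinj, htgt', hatoms'⟩ := hu'
  obtain ⟨-, htgt, hatoms⟩ := hu
  constructor
  · -- q ⊆ q̃_{d'}
    intro G a ha
    obtain ⟨μ, hcons, htar, hsat⟩ := ha
    set dec := Function.invFun enc with hdecdef
    have hli : Function.LeftInverse dec enc := Function.leftInverse_invFun hinj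
    set μ' : Term → Con := fun t =>
      match t with
      | Term.con c => c
      | Term.var v => μ (pathEnd q (dec v)) with hμ'
    have key : ∀ P : List (Atom Rel × Term), IsPath q P →
        μ' (oTerm q enc P) = μ (pathEnd q P) := by
      intro P hP
      unfold oTerm
      cases he : pathEnd q P with
      | var w => simp [hμ', hli P, he]
      | con c =>
          have hm : c ∈ q.cons := pathEnd_con_mem hP he
          simp [hμ', he, hcons c hm]
    refine ⟨μ', fun c _ => rfl, ?_, ?_⟩
    · have h0 : pathEnd q ([] : List (Atom Rel × Term)) = Term.var q.target := rfl
      rw [htgt']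
      show μ (pathEnd q (dec (enc []))) = a
      rw [hli, h0, htar]
    · intro B hB
      have hB' : B ∈ UnravelAtoms q enc d' := by
        rw [← hatoms']; exact_mod_cast hB
      obtain ⟨P, A', t', hvp, hlen, hcase⟩ := hB'
      have hP : IsPath q P := isPathFrom_prefix hvp.1
      have hP' : IsPath q (P ++ [(A', t')]) := hvp.1
      have hA' : A' ∈ q.atoms := (isPathFrom_concat hvp.1).1
      have hend' : pathEnd q (P ++ [(A', t')]) = t' := pathEnd_concat q P (A', t')
      rcases hcase with ⟨hs, ht, hBeq⟩ | ⟨hs, ht, hBeq⟩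
      · subst hBeq
        have h1 : μ' (oTerm q enc P) = μ A'.src := by rw [key P hP, hs]
        have h2 : μ' (oTerm q enc (P ++ [(A', t')])) = μ A'.tgt := by
          rw [key _ hP', hend', ht]
        simpa [h1, h2] using hsat A' hA'
      · subst hBeq
        have h1 : μ' (oTerm q enc P) = μ A'.tgt := by rw [key P hP, ht]
        have h2 : μ' (oTerm q enc (P ++ [(A', t')])) = μ A'.src := by
          rw [key _ hP', hend', hs]
        simpa [h1, h2] using hsat A' hA'
  · -- q̃_{d'} ⊆ q̃_d
    have hsub : ∀ B ∈ qd.atoms, B ∈ qd'.atoms := by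
      intro B hB
      have : B ∈ UnravelAtoms q enc d := by rw [← hatoms]; exact_mod_cast hB
      obtain ⟨P, A', t', hvp, hlen, hcase⟩ := this
      have : B ∈ UnravelAtoms q enc d' := ⟨P, A', t', hvp, hlen.trans hdd', hcase⟩
      rw [← Finset.mem_coe, hatoms']; exact this
    intro G a ha
    obtain ⟨μ, hcons, htar, hsat⟩ := ha
    refine ⟨μ, ?_, ?_, fun A hA => hsat A (hsub A hA)⟩
    · intro c hc
      obtain ⟨A, hA, hst⟩ := hc
      exact hcons c ⟨A, hsub A hA, hst⟩
    · rw [htgt, ← htgt']; exact htar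

end KGQuery
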